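/- In the limiting dynamical system, if the growth parameter ρ is strictly positive, then the blow-up time is finite: t* < ∞ for every γ > 0 and every α > 1. -/

import Mathlib

namespace SelectiveSweeps

noncomputable section

/-- `γ_j = (1+γ)^j − 1` for `j ∈ ℤ`. -/
def gam (γ : ℝ) (j : ℤ) : ℝ := (1 + γ) ^ j - 1

/-- `λ_j = (1+ρ)(1+γ)^j − 1` for `j ∈ ℤ`. -/
def lam (γ ρ : ℝ) (j : ℤ) : ℝ := (1 + ρ) * (1 + γ) ^ j - 1

/-- A state of the recursion: the time `s_n` together with the values `y_j(s_n)`, `j ∈ ℕ`. -/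
structure St where
  s : ℝ
  y : ℕ → ℝ

/-- `α_n = α + ρ s_n / γ`. -/
def alphaOf (γ ρ α : ℝ) (σ : St) : ℝ := α + ρ * σ.s / γ

/-- `m_n = max {j : y_j(s_n) = α_n}`. -/
def mOf (γ ρ α : ℝ) (σ : St) : ℕ := sSup {j : ℕ | σ.y j = alphaOf γ ρ α σ}

/-- `k_n = max {j : y_j(s_n) > 0}`. -/
def kOf (σ : St) : ℕ := sSup {j : ℕ | 0 < σ.y j}

/-- `k_n^* = k_n` if `y_{k_n}(s_n) < 1`, and `k_n + 1` if `y_{k_n}(s_n) = 1`. -/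
def kstarOf (σ : St) : ℕ := if σ.y (kOf σ) < 1 then kOf σ else kOf σ + 1

/-- `δ_{n,j}`:  `(α_n − y_j(s_n))·γ/(λ_{j−m_n} − ρ)` for `m_n < j < k_n^*` and
`(1 − y_{k_n^*}(s_n))·γ/λ_{k_n^*−m_n}` for `j = k_n^*`. -/
def deltaOf (γ ρ α : ℝ) (σ : St) (j : ℕ) : ℝ :=
  if j = kstarOf σ then
    (1 - σ.y (kstarOf σ)) * γ / lam γ ρ ((kstarOf σ : ℤ) - (mOf γ ρ α σ : ℤ))
  else
    (alphaOf γ ρ α σ - σ.y j) * γ / (lam γ ρ ((j : ℤ) - (mOf γ ρ α σ : ℤ)) - ρ)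

/-- `Δ_n = min {δ_{n,j} : m_n < j ≤ k_n^*}`. -/
def DeltaOf (γ ρ α : ℝ) (σ : St) : ℝ :=
  sInf (deltaOf γ ρ α σ '' Set.Ioc (mOf γ ρ α σ) (kstarOf σ))

/-- One step of the recursion: `s_{n+1} = s_n + Δ_n` and, evaluating
`y_j(s_n + t) = max (y_j(s_n) + t·λ_{j−m_n}/γ) 0` (for `j ≤ k_n^*`; `0` for `j > k_n^*`)
at `t = Δ_n`, the new values `y_j(s_{n+1})`. -/
def step (γ ρ α : ℝ) (σ : St) : St where
  s := σ.s + DeltaOf γ ρ α σ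
  y := fun j =>
    if j ≤ kstarOf σ then
      max (σ.y j + DeltaOf γ ρ α σ * lam γ ρ ((j : ℤ) - (mOf γ ρ α σ : ℤ)) / γ) 0
    else 0

/-- The state after `n` steps: `(state γ ρ α n).s = s_n` and `(state γ ρ α n).y j = y_j(s_n)`.
Initially `s_0 = 0` and `y_j(0) = max (α − j) 0`. -/
def state (γ ρ α : ℝ) (n : ℕ) : St :=
  (step γ ρ α)^[n] ⟨0, fun j => max (α - j) 0⟩

/-- The index `n` of the interval `[s_n, s_{n+1}]` used to evaluate `y_j` at time `t`. -/
def idxAt (γ ρ α : ℝ) (t : ℝ) : ℕ := sInf {n : ℕ | t < (state γ ρ α (n + 1)).s}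

/-- `y_j(t)`, evaluated via the piecewise linear recursion: for `s_n ≤ t ≤ s_{n+1}`,
`y_j(t) = max (y_j(s_n) + (t − s_n)·λ_{j−m_n}/γ) 0` for `j ≤ k_n^*`, and `0` for `j > k_n^*`. -/
def yAt (γ ρ α : ℝ) (j : ℕ) (t : ℝ) : ℝ :=
  let σ := state γ ρ α (idxAt γ ρ α t)
  if j ≤ kstarOf σ then
    max (σ.y j + (t - σ.s) * lam γ ρ ((j : ℤ) - (mOf γ ρ α σ : ℤ)) / γ) 0
  else 0

/-- Conditions (i)–(ii) at a state: (i) the sets defining `m_n` and `k_n` are nonempty and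
bounded, `y_j(s_n) ≤ α_n` for all `j`, and `y_j(s_n) > 0` for `m_n ≤ j ≤ k_n`;
(ii) `y_{j+1}(s_n) ≥ y_j(s_n) − 1` for all `0 ≤ j ≤ k_n`. -/
def Cond (γ ρ α : ℝ) (σ : St) : Prop :=
  {j : ℕ | σ.y j = alphaOf γ ρ α σ}.Nonempty ∧
  BddAbove {j : ℕ | σ.y j = alphaOf γ ρ α σ} ∧
  {j : ℕ | 0 < σ.y j}.Nonempty ∧
  BddAbove {j : ℕ | 0 < σ.y j} ∧
  (∀ j : ℕ, σ.y j ≤ alphaOf γ ρ α σ) ∧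
  (∀ j : ℕ, mOf γ ρ α σ ≤ j → j ≤ kOf σ → 0 < σ.y j) ∧
  (∀ j : ℕ, j ≤ kOf σ → σ.y j - 1 ≤ σ.y (j + 1))

/-- `t_j = inf { t ∈ [0, t*) : y_j(t) = 1 }`, where `t < t* = Σ_n Δ_n = sup_n s_n` is
expressed as `∃ n, t < s_n`. -/
def tHit (γ ρ α : ℝ) (j : ℕ) : ℝ :=
  sInf {t : ℝ | 0 ≤ t ∧ (∃ n : ℕ, t < (state γ ρ α n).s) ∧ yAt γ ρ α j t = 1}

/-!
During one step (with `m` and `k*` fixed) the rates `λ_{j-m}` grow geometrically in `j`, so every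
site `j ≤ k*` gains at most `κ (1+γ)^(j-k*)` times what the top site `k*` gains, where
`κ = z/(z-1)` and `z = (1+ρ)(1+γ)`. The weighted deficit `R = (1+γ)^(-k*) ((1+γ)/γ - y_{k*})` of
the top site drops by exactly `(1+γ)^(-k*)` times that gain, also when the top site reaches `1`
and `k*` moves up. Hence `y_j + κ (1+γ)^j R` never increases; it starts below
`α + κ (1+γ)/γ`, and `R ≥ 0`. Taking `j = m` bounds `α_n = α + ρ s_n/γ`, hence `s_n` when `ρ > 0`.
-/

variable {γ ρ α : ℝ} {σ : St}

theorem lam_zero : lam γ ρ 0 = ρ := by simp [lam]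

theorem lam_strictMono (hγ : 0 < γ) (hρ : -1 < ρ) : StrictMono (lam γ ρ) := fun _ _ h => by
  have := zpow_lt_zpow_right₀ (by linarith : (1 : ℝ) < 1 + γ) h
  unfold lam
  nlinarith

theorem lam_le_rho (hγ : 0 < γ) (hρ : -1 < ρ) {d : ℤ} (hd : d ≤ 0) : lam γ ρ d ≤ ρ := by
  simpa only [lam_zero] using (lam_strictMono hγ hρ).monotone hd

theorem rho_lt_lam (hγ : 0 < γ) (hρ : -1 < ρ) {d : ℤ} (hd : 0 < d) : ρ < lam γ ρ d := by
  simpa only [lam_zero] using lam_strictMono hγ hρ hd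

def kappa (γ ρ : ℝ) : ℝ := (1 + ρ) * (1 + γ) / ((1 + ρ) * (1 + γ) - 1)

theorem kappa_pos (hγ : 0 < γ) (hρ : 0 ≤ ρ) : 0 < kappa γ ρ :=
  div_pos (by nlinarith) (by nlinarith)

theorem lam_le_kappa_mul (hγ : 0 < γ) (hρ : 0 ≤ ρ) (a : ℤ) {b : ℤ} (hb : 1 ≤ b) :
    lam γ ρ a ≤ kappa γ ρ * (1 + γ) ^ (a - b) * lam γ ρ b := by
  have hX : (0 : ℝ) < 1 + γ := by linarith
  have hXb : 1 + γ ≤ (1 + γ) ^ b := by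
    simpa using zpow_le_zpow_right₀ (by linarith : (1 : ℝ) ≤ 1 + γ) hb
  have hz : 0 < (1 + ρ) * (1 + γ) - 1 := by nlinarith
  -- `(1+ρ)(1+γ)^b ≤ κ λ_b` rearranges to `z ≤ (1+ρ)(1+γ)^b`
  have htop : (1 + ρ) * (1 + γ) ^ b ≤ kappa γ ρ * lam γ ρ b := by
    rw [kappa, lam, div_mul_eq_mul_div, le_div_iff₀ hz]
    nlinarith
  have hsplit : (1 + γ) ^ a = (1 + γ) ^ (a - b) * (1 + γ) ^ b := by
    rw [← zpow_add₀ hX.ne', sub_add_cancel]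
  calc lam γ ρ a ≤ (1 + γ) ^ (a - b) * ((1 + ρ) * (1 + γ) ^ b) := by
        rw [lam, hsplit]; linarith
    _ ≤ (1 + γ) ^ (a - b) * (kappa γ ρ * lam γ ρ b) := by gcongr
    _ = kappa γ ρ * (1 + γ) ^ (a - b) * lam γ ρ b := by ring

theorem kOf_le_kstarOf : kOf σ ≤ kstarOf σ := by
  unfold kstarOf; split <;> omega

theorem DeltaOf_le_deltaOf {j : ℕ} (hj : j ∈ Set.Ioc (mOf γ ρ α σ) (kstarOf σ)) :
    DeltaOf γ ρ α σ ≤ deltaOf γ ρ α σ j :=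
  csInf_le ((Set.finite_Ioc _ _).image _).bddBelow ⟨j, hj, rfl⟩

theorem DeltaOf_mul_lam_sub_le (hγ : 0 < γ) (hρ : -1 < ρ) {j : ℕ} (hmj : mOf γ ρ α σ < j)
    (hjk : j < kstarOf σ) :
    DeltaOf γ ρ α σ * (lam γ ρ ((j : ℤ) - (mOf γ ρ α σ : ℤ)) - ρ) ≤
      (alphaOf γ ρ α σ - σ.y j) * γ := by
  have h := DeltaOf_le_deltaOf (σ := σ) ⟨hmj, hjk.le⟩
  rwa [deltaOf, if_neg hjk.ne, le_div_iff₀ (sub_pos.mpr (rho_lt_lam hγ hρ (by omega)))] at h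

theorem step_s : (step γ ρ α σ).s = σ.s + DeltaOf γ ρ α σ := rfl

theorem step_y_of_le {j : ℕ} (hj : j ≤ kstarOf σ) :
    (step γ ρ α σ).y j =
      max (σ.y j + DeltaOf γ ρ α σ * lam γ ρ ((j : ℤ) - (mOf γ ρ α σ : ℤ)) / γ) 0 :=
  if_pos hj

theorem step_y_of_lt {j : ℕ} (hj : kstarOf σ < j) : (step γ ρ α σ).y j = 0 :=
  if_neg (by omega)

theorem alphaOf_step :
    alphaOf γ ρ α (step γ ρ α σ) = alphaOf γ ρ α σ + ρ * DeltaOf γ ρ α σ / γ := by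
  rw [alphaOf, alphaOf, step_s]; ring

structure Invariant (γ ρ α : ℝ) (σ : St) : Prop where
  one_lt_alphaOf : 1 < alphaOf γ ρ α σ
  nonneg : ∀ j, 0 ≤ σ.y j
  le_alphaOf : ∀ j, σ.y j ≤ alphaOf γ ρ α σ
  exists_eq_alphaOf : ∃ j, σ.y j = alphaOf γ ρ α σ
  bddAbove_pos : BddAbove {j : ℕ | 0 < σ.y j}
  y_kOf_le_one : σ.y (kOf σ) ≤ 1

-- The target `(1+γ)/γ` of the top site is the one for which `reserve` does not jump when `k*`
-- moves up: `((1+γ)/γ) / (1+γ) = (1+γ)/γ - 1`.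
def reserve (γ : ℝ) (σ : St) : ℝ :=
  (1 + γ) ^ (-(kstarOf σ : ℤ)) * ((1 + γ) / γ - σ.y (kstarOf σ))

namespace Invariant

theorem init (hα : 1 < α) : Invariant γ ρ α ⟨0, fun j => max (α - j) 0⟩ := by
  have hα₀ : alphaOf γ ρ α ⟨0, fun j => max (α - j) 0⟩ = α := by simp [alphaOf]
  have hbdd : BddAbove {j : ℕ | 0 < max (α - j) 0} := ⟨⌈α⌉₊, fun j hj => by
    have : (j : ℝ) < ⌈α⌉₊ := by
      simp only [Set.mem_ofPred_eq, lt_max_iff, lt_irrefl, or_false, sub_pos] at hj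
      exact hj.trans_le (Nat.le_ceil α)
    exact_mod_cast this.le⟩
  refine ⟨by rwa [hα₀], fun j => le_max_right _ _, fun j => ?_, ⟨0, ?_⟩, hbdd, ?_⟩
  · rw [hα₀]; exact max_le (by simp) (by linarith)
  · simp [hα₀, (by linarith : (0 : ℝ) ≤ α)]
  · -- `y_{k+1} ≥ y_k - 1`, so `y_k > 1` would make `k + 1` a positive site
    by_contra h
    set k := kOf ⟨0, fun j => max (α - j) 0⟩
    have hyk : 1 < α - k := by
      rcases lt_max_iff.mp (not_le.mp h) with h | h
      exacts [h, absurd h (by norm_num)]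
    have hk : 0 < max (α - (k + 1 : ℕ)) 0 := by
      push_cast
      exact lt_max_of_lt_left (by linarith)
    have : k + 1 ≤ k := le_csSup hbdd hk
    omega

variable (H : Invariant γ ρ α σ)
include H

theorem y_eq_zero_of_kOf_lt {j : ℕ} (hj : kOf σ < j) : σ.y j = 0 :=
  (H.nonneg j).antisymm' (not_lt.mp fun h => (le_csSup H.bddAbove_pos h).not_gt hj)

theorem bddAbove_eq_alphaOf : BddAbove {j : ℕ | σ.y j = alphaOf γ ρ α σ} :=
  H.bddAbove_pos.mono fun j hj => by
    simp only [Set.mem_ofPred_eq] at hj ⊢; linarith [H.one_lt_alphaOf]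

theorem le_mOf {j : ℕ} (hj : σ.y j = alphaOf γ ρ α σ) : j ≤ mOf γ ρ α σ :=
  le_csSup H.bddAbove_eq_alphaOf hj

theorem y_mOf : σ.y (mOf γ ρ α σ) = alphaOf γ ρ α σ :=
  Nat.sSup_mem H.exists_eq_alphaOf H.bddAbove_eq_alphaOf

theorem mOf_lt_kstarOf : mOf γ ρ α σ < kstarOf σ := by
  have hm : mOf γ ρ α σ ≤ kOf σ :=
    le_csSup H.bddAbove_pos
      (by simp only [Set.mem_ofPred_eq, H.y_mOf]; linarith [H.one_lt_alphaOf])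
  have hne : mOf γ ρ α σ ≠ kOf σ := fun h => by
    have := H.y_kOf_le_one
    rw [← h, H.y_mOf] at this
    linarith [H.one_lt_alphaOf]
  exact (lt_of_le_of_ne hm hne).trans_le kOf_le_kstarOf

theorem y_kstarOf_lt_one : σ.y (kstarOf σ) < 1 := by
  unfold kstarOf
  split_ifs with h
  · exact h
  · rw [H.y_eq_zero_of_kOf_lt (Nat.lt_succ_self _)]; norm_num

theorem zpow_mul_reserve_le (hγ : 0 < γ) {j : ℕ} (hj : j ≤ kstarOf σ) :
    (1 + γ) ^ (j : ℤ) * reserve γ σ ≤ (1 + γ) / γ := by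
  have hX : (1 : ℝ) ≤ 1 + γ := by linarith
  have hc : 1 ≤ (1 + γ) / γ := by rw [le_div_iff₀ hγ]; linarith
  rw [reserve, ← mul_assoc, ← zpow_add₀ (by linarith : (1 + γ : ℝ) ≠ 0), ← sub_eq_add_neg]
  calc (1 + γ) ^ ((j : ℤ) - kstarOf σ) * ((1 + γ) / γ - σ.y (kstarOf σ))
      ≤ 1 * ((1 + γ) / γ - σ.y (kstarOf σ)) := by
        gcongr
        · linarith [H.y_kstarOf_lt_one]
        · exact zpow_le_one_of_nonpos₀ hX (by omega)
    _ ≤ (1 + γ) / γ := by linarith [H.nonneg (kstarOf σ)]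

theorem reserve_nonneg (hγ : 0 < γ) : 0 ≤ reserve γ σ := by
  have hc : 1 ≤ (1 + γ) / γ := by rw [le_div_iff₀ hγ]; linarith
  exact mul_nonneg (zpow_pos (by linarith) _).le (by linarith [H.y_kstarOf_lt_one])

variable (hγ : 0 < γ) (hρ : 0 ≤ ρ)
include hγ hρ

theorem lam_kstarOf_sub_mOf_pos : 0 < lam γ ρ ((kstarOf σ : ℤ) - (mOf γ ρ α σ : ℤ)) :=
  hρ.trans_lt (rho_lt_lam hγ (by linarith) (by have := H.mOf_lt_kstarOf; omega))

theorem deltaOf_pos {j : ℕ} (hj : j ∈ Set.Ioc (mOf γ ρ α σ) (kstarOf σ)) :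
    0 < deltaOf γ ρ α σ j := by
  unfold deltaOf
  split_ifs with hjk
  · exact div_pos (mul_pos (by linarith [H.y_kstarOf_lt_one]) hγ)
      (H.lam_kstarOf_sub_mOf_pos hγ hρ)
  · have hy : σ.y j < alphaOf γ ρ α σ :=
      (H.le_alphaOf j).lt_of_ne fun h => (H.le_mOf h).not_gt hj.1
    exact div_pos (mul_pos (by linarith) hγ)
      (sub_pos.mpr (rho_lt_lam hγ (by linarith) (by have := hj.1; omega)))

theorem DeltaOf_pos : 0 < DeltaOf γ ρ α σ := by
  obtain ⟨j, hj, hδ⟩ :=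
    ((Set.nonempty_Ioc.mpr H.mOf_lt_kstarOf).image (deltaOf γ ρ α σ)).csInf_mem
      ((Set.finite_Ioc _ _).image _)
  rw [DeltaOf, ← hδ]
  exact H.deltaOf_pos hγ hρ hj

theorem DeltaOf_mul_lam_le :
    DeltaOf γ ρ α σ * lam γ ρ ((kstarOf σ : ℤ) - (mOf γ ρ α σ : ℤ)) ≤
      (1 - σ.y (kstarOf σ)) * γ := by
  have h := DeltaOf_le_deltaOf ⟨H.mOf_lt_kstarOf, le_rfl⟩
  rwa [deltaOf, if_pos rfl, le_div_iff₀ (H.lam_kstarOf_sub_mOf_pos hγ hρ)] at h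

theorem step_y_kstarOf :
    (step γ ρ α σ).y (kstarOf σ) = σ.y (kstarOf σ) +
      DeltaOf γ ρ α σ * lam γ ρ ((kstarOf σ : ℤ) - (mOf γ ρ α σ : ℤ)) / γ := by
  rw [step_y_of_le le_rfl, max_eq_left]
  have := H.nonneg (kstarOf σ)
  have := H.DeltaOf_pos hγ hρ
  have := H.lam_kstarOf_sub_mOf_pos hγ hρ
  positivity

theorem step_y_kstarOf_pos : 0 < (step γ ρ α σ).y (kstarOf σ) := by
  rw [H.step_y_kstarOf hγ hρ]
  have := H.nonneg (kstarOf σ)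
  have := H.DeltaOf_pos hγ hρ
  have := H.lam_kstarOf_sub_mOf_pos hγ hρ
  positivity

theorem step_y_kstarOf_le_one : (step γ ρ α σ).y (kstarOf σ) ≤ 1 := by
  rw [H.step_y_kstarOf hγ hρ, ← le_sub_iff_add_le', div_le_iff₀ hγ]
  exact H.DeltaOf_mul_lam_le hγ hρ

theorem kOf_step : kOf (step γ ρ α σ) = kstarOf σ := by
  have hpos : {j : ℕ | 0 < (step γ ρ α σ).y j} ⊆ Set.Iic (kstarOf σ) := fun j hj => by
    by_contra h
    simp [step_y_of_lt (not_le.mp h)] at hj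
  exact le_antisymm (csSup_le ⟨_, H.step_y_kstarOf_pos hγ hρ⟩ hpos)
    (le_csSup ⟨_, hpos⟩ (H.step_y_kstarOf_pos hγ hρ))

theorem kstarOf_step : kstarOf (step γ ρ α σ) =
    if (step γ ρ α σ).y (kstarOf σ) < 1 then kstarOf σ else kstarOf σ + 1 := by
  rw [kstarOf, H.kOf_step hγ hρ]

theorem step_y_mOf : (step γ ρ α σ).y (mOf γ ρ α σ) = alphaOf γ ρ α (step γ ρ α σ) := by
  have := H.DeltaOf_pos hγ hρ
  have := H.one_lt_alphaOf
  rw [step_y_of_le H.mOf_lt_kstarOf.le, sub_self, lam_zero, H.y_mOf, alphaOf_step,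
    max_eq_left (by positivity)]
  ring

theorem alphaOf_le_alphaOf_step : alphaOf γ ρ α σ ≤ alphaOf γ ρ α (step γ ρ α σ) := by
  have := H.DeltaOf_pos hγ hρ
  rw [alphaOf_step]
  exact le_add_of_nonneg_right (by positivity)

theorem step_y_le_alphaOf (j : ℕ) : (step γ ρ α σ).y j ≤ alphaOf γ ρ α (step γ ρ α σ) := by
  have hα' := H.one_lt_alphaOf.trans_le (H.alphaOf_le_alphaOf_step hγ hρ)
  rcases lt_or_ge (kstarOf σ) j with hkj | hjk
  · rw [step_y_of_lt hkj]; linarith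
  rcases hjk.eq_or_lt with rfl | hjk
  · linarith [H.step_y_kstarOf_le_one hγ hρ]
  rw [step_y_of_le hjk.le]
  refine max_le ?_ (by linarith)
  suffices h : DeltaOf γ ρ α σ * lam γ ρ ((j : ℤ) - (mOf γ ρ α σ : ℤ)) ≤
      (alphaOf γ ρ α σ - σ.y j) * γ + ρ * DeltaOf γ ρ α σ by
    have := (div_le_div_iff_of_pos_right hγ).mpr h
    rw [add_div, mul_div_cancel_right₀ _ hγ.ne'] at this
    rw [alphaOf_step]
    linarith
  rcases le_or_gt j (mOf γ ρ α σ) with hjm | hmj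
  · -- sites up to the peak grow no faster than the peak itself
    have := lam_le_rho hγ (by linarith : -1 < ρ) (show (j : ℤ) - (mOf γ ρ α σ : ℤ) ≤ 0 by omega)
    nlinarith [H.DeltaOf_pos hγ hρ, mul_nonneg (sub_nonneg.mpr (H.le_alphaOf j)) hγ.le]
  · linarith [DeltaOf_mul_lam_sub_le hγ (by linarith) hmj hjk]

theorem reserve_step : reserve γ (step γ ρ α σ) = reserve γ σ -
    (1 + γ) ^ (-(kstarOf σ : ℤ)) * ((step γ ρ α σ).y (kstarOf σ) - σ.y (kstarOf σ)) := by
  rw [reserve, reserve, H.kstarOf_step hγ hρ]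
  split_ifs with h
  · ring
  · have htop : (step γ ρ α σ).y (kstarOf σ) = 1 :=
      (H.step_y_kstarOf_le_one hγ hρ).antisymm (not_lt.mp h)
    rw [step_y_of_lt (Nat.lt_succ_self _), htop, Nat.cast_succ, neg_add,
      zpow_add₀ (by linarith : (1 + γ : ℝ) ≠ 0), zpow_neg_one]
    field_simp
    ring

theorem step_y_le {j : ℕ} (hj : j ≤ kstarOf σ) :
    (step γ ρ α σ).y j ≤ σ.y j + kappa γ ρ * (1 + γ) ^ ((j : ℤ) - kstarOf σ) *
      ((step γ ρ α σ).y (kstarOf σ) - σ.y (kstarOf σ)) := by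
  have hΔ := H.DeltaOf_pos hγ hρ
  have hκ := kappa_pos hγ hρ
  have hlam := H.lam_kstarOf_sub_mOf_pos hγ hρ
  have hX := zpow_pos (by linarith : (0 : ℝ) < 1 + γ) ((j : ℤ) - kstarOf σ)
  rw [H.step_y_kstarOf hγ hρ, add_sub_cancel_left, step_y_of_le hj]
  refine max_le ?_ (by have := H.nonneg j; positivity)
  have hrate := lam_le_kappa_mul hγ hρ ((j : ℤ) - mOf γ ρ α σ)
    (b := (kstarOf σ : ℤ) - mOf γ ρ α σ) (by have := H.mOf_lt_kstarOf; omega)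
  rw [sub_sub_sub_cancel_right] at hrate
  have := div_le_div_of_nonneg_right (mul_le_mul_of_nonneg_left hrate hΔ.le) hγ.le
  calc _ ≤ σ.y j + DeltaOf γ ρ α σ * (kappa γ ρ * (1 + γ) ^ ((j : ℤ) - kstarOf σ) *
        lam γ ρ ((kstarOf σ : ℤ) - mOf γ ρ α σ)) / γ := by linarith
    _ = _ := by ring

theorem step : Invariant γ ρ α (step γ ρ α σ) where
  one_lt_alphaOf := H.one_lt_alphaOf.trans_le (H.alphaOf_le_alphaOf_step hγ hρ)
  nonneg j := by
    by_cases hj : j ≤ kstarOf σ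
    · rw [step_y_of_le hj]; exact le_max_right _ _
    · rw [step_y_of_lt (not_le.mp hj)]
  le_alphaOf := H.step_y_le_alphaOf hγ hρ
  exists_eq_alphaOf := ⟨_, H.step_y_mOf hγ hρ⟩
  bddAbove_pos := ⟨kstarOf σ, fun j hj => not_lt.mp fun h => by simp [step_y_of_lt h] at hj⟩
  y_kOf_le_one := H.kOf_step hγ hρ ▸ H.step_y_kstarOf_le_one hγ hρ

end Invariant

theorem state_succ (n : ℕ) : state γ ρ α (n + 1) = step γ ρ α (state γ ρ α n) :=
  Function.iterate_succ_apply' _ _ _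

theorem invariant_state (hγ : 0 < γ) (hρ : 0 ≤ ρ) (hα : 1 < α) (n : ℕ) :
    Invariant γ ρ α (state γ ρ α n) := by
  induction n with
  | zero => exact Invariant.init hα
  | succ n ih => rw [state_succ]; exact ih.step hγ hρ

theorem y_add_kappa_mul_reserve_le (hγ : 0 < γ) (hρ : 0 ≤ ρ) (hα : 1 < α) (n : ℕ) {j : ℕ}
    (hj : j ≤ kstarOf (state γ ρ α n)) :
    (state γ ρ α n).y j + kappa γ ρ * ((1 + γ) ^ (j : ℤ) * reserve γ (state γ ρ α n)) ≤
      α + kappa γ ρ * ((1 + γ) / γ) := by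
  have hκ := (kappa_pos hγ hρ).le
  induction n generalizing j with
  | zero =>
    have hy : max (α - j) 0 ≤ α := max_le (by simp) (by linarith)
    exact add_le_add hy <| mul_le_mul_of_nonneg_left
      ((Invariant.init (ρ := ρ) hα).zpow_mul_reserve_le hγ hj) hκ
  | succ n ih =>
    have H := invariant_state hγ hρ hα n
    rw [state_succ] at hj ⊢
    by_cases hjk : j ≤ kstarOf (state γ ρ α n)
    · have hgain := H.step_y_le hγ hρ hjk
      rw [H.reserve_step hγ hρ, mul_sub, ← mul_assoc _ (_ ^ _),
        ← zpow_add₀ (by linarith : (1 + γ : ℝ) ≠ 0), ← sub_eq_add_neg]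
      linarith [ih hjk]
    · -- `j` is the site that has just become active
      have := mul_le_mul_of_nonneg_left ((H.step hγ hρ).zpow_mul_reserve_le hγ hj) hκ
      rw [step_y_of_lt (not_le.mp hjk)]
      linarith

theorem alphaOf_state_le (hγ : 0 < γ) (hρ : 0 ≤ ρ) (hα : 1 < α) (n : ℕ) :
    alphaOf γ ρ α (state γ ρ α n) ≤ α + kappa γ ρ * ((1 + γ) / γ) := by
  have H := invariant_state hγ hρ hα n
  have h := y_add_kappa_mul_reserve_le hγ hρ hα n H.mOf_lt_kstarOf.le
  have := kappa_pos hγ hρ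
  have := H.reserve_nonneg hγ
  have : 0 ≤ kappa γ ρ * ((1 + γ) ^ (mOf γ ρ α (state γ ρ α n) : ℤ) *
      reserve γ (state γ ρ α n)) := by positivity
  rw [H.y_mOf] at h
  linarith

/-- If the growth parameter `ρ` is strictly positive, then the blow-up time
is finite: `t* = sup_n s_n < ∞`, for every `γ > 0` and every `α > 1`. -/
theorem blowup_of_growing_population (γ ρ α : ℝ) (hγ : 0 < γ) (hρ : 0 < ρ) (hα : 1 < α) :
    BddAbove (Set.range fun n : ℕ => (state γ ρ α n).s) := by
  refine ⟨kappa γ ρ * (1 + γ) / ρ, ?_⟩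
  rintro _ ⟨n, rfl⟩
  have h := alphaOf_state_le hγ hρ.le hα n
  rw [alphaOf, add_le_add_iff_left, div_le_iff₀ hγ, mul_assoc,
    div_mul_cancel₀ _ hγ.ne'] at h
  rw [le_div_iff₀ hρ]
  linarith

end

end SelectiveSweeps
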